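/- In the continuous setting with E non-increasing, the integral bound ∫₀^∞ a_t c_t ‖∇f(X(t))‖² dt ≤ A₀(f(x₀) − f*) + (1/2)·dist(x₀, Ω)² holds, where Ω is the set of minimizers of f. -/

import Mathlib

/-!
For a minimizer `y`, the energy `E_t = A_t (f(X_t) - f(y)) + ½‖Z_t - y‖²` is nonnegative and
`Ė_t ≤ -a_t c_t ‖∇f(X_t)‖²`: substituting `Z_t - y = b_t Ẋ_t + c_t ∇f(X_t) + (X_t - y)` into
`⟪Z_t - y, Ż_t⟫` cancels the `A_t ⟪∇f(X_t), Ẋ_t⟫` term, and the remainder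
`Ȧ_t (f(X_t) - f(y)) - a_t ⟪∇f(X_t), X_t - y⟫` is nonpositive by `Ȧ_t ≤ a_t` and convexity.
Integrating gives `∫₀^∞ a_t c_t ‖∇f(X_t)‖² dt ≤ E_0`, and minimizing `E_0` over `y ∈ Ω` gives the
distance term.
-/

open Set Filter Topology MeasureTheory

local notation "⟪" x ", " y "⟫" => @inner ℝ _ _ x y

section Gradient

variable {H : Type*} [NormedAddCommGroup H] [InnerProductSpace ℝ H] [CompleteSpace H]
  {f : H → ℝ} {g : H}

theorem HasGradientAt.comp_hasDerivAt {γ : ℝ → H} {v : H} {t : ℝ}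
    (hf : HasGradientAt f g (γ t)) (hγ : HasDerivAt γ v t) :
    HasDerivAt (fun s => f (γ s)) ⟪g, v⟫ t := by
  simpa [Function.comp_def] using hf.hasFDerivAt.comp_hasDerivAt t hγ

theorem ConvexOn.inner_gradient_le_sub {x : H} (hf : ConvexOn ℝ univ f)
    (hg : HasGradientAt f g x) (y : H) :
    ⟪g, y - x⟫ ≤ f y - f x := by
  have hline : ConvexOn ℝ univ (fun s => f (AffineMap.lineMap (k := ℝ) x y s)) := by
    simpa [Function.comp_def] using hf.comp_affineMap (AffineMap.lineMap (k := ℝ) x y)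
  have hg0 : HasGradientAt f g (AffineMap.lineMap (k := ℝ) x y 0) := by simpa using hg
  have hderiv := hg0.comp_hasDerivAt AffineMap.hasDerivAt_lineMap
  simpa [slope] using hline.le_slope_of_hasDerivAt (mem_univ 0) (mem_univ 1) one_pos hderiv

end Gradient

theorem integral_Ioi_le_of_hasDerivAt_le_neg {E E' φ : ℝ → ℝ} {t₀ : ℝ}
    (hE : ∀ t ∈ Ici t₀, HasDerivAt E (E' t) t) (hE' : ∀ t ∈ Ici t₀, E' t ≤ -φ t)
    (hE_nonneg : ∀ t ∈ Ici t₀, 0 ≤ E t) (hφ : IntegrableOn φ (Ioi t₀)) :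
    ∫ t in Ioi t₀, φ t ≤ E t₀ := by
  have hinterval : ∀ T ∈ Ici t₀, ∫ t in t₀..T, φ t ≤ E t₀ := by
    intro T hT
    have hφT : IntegrableOn (fun t => -φ t) (Icc t₀ T) :=
      ((integrableOn_Icc_iff_integrableOn_Ioc).2 (hφ.mono_set Ioc_subset_Ioi_self)).neg
    have := intervalIntegral.sub_le_integral_of_hasDeriv_right_of_le hT
      (fun t ht => (hE t ht.1).continuousAt.continuousWithinAt)
      (fun t ht => (hE t (mem_Ici.2 ht.1.le)).hasDerivWithinAt) hφT
      (fun t ht => hE' t (mem_Ici.2 ht.1.le))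
    rw [intervalIntegral.integral_neg] at this
    linarith [hE_nonneg T hT]
  exact le_of_tendsto (intervalIntegral_tendsto_integral_Ioi t₀ hφ tendsto_id)
    (eventually_atTop.2 ⟨t₀, hinterval⟩)

theorem Metric.le_infDist_sq {α : Type*} [PseudoMetricSpace α] {s : Set α} {x : α} {r : ℝ}
    (hs : s.Nonempty) (h : ∀ y ∈ s, r ≤ dist x y ^ 2) : r ≤ infDist x s ^ 2 := by
  rcases le_or_gt r 0 with hr | hr
  · exact hr.trans (sq_nonneg _)
  have hsqrt : √r ≤ infDist x s :=
    (le_infDist hs).2 fun y hy => (Real.sqrt_le_sqrt (h y hy)).trans_eq (Real.sqrt_sq dist_nonneg)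
  calc r = √r ^ 2 := (Real.sq_sqrt hr.le).symm
    _ ≤ infDist x s ^ 2 := by gcongr

theorem nonneg_of_nonneg_zero_of_pos {u : ℝ → ℝ} (h0 : 0 ≤ u 0) (hpos : ∀ t > 0, 0 < u t)
    {t : ℝ} (ht : t ∈ Ici 0) : 0 ≤ u t := by
  rcases (mem_Ici.1 ht).eq_or_lt with rfl | h
  exacts [h0, (hpos t h).le]

section Lyapunov

variable {H : Type*} [NormedAddCommGroup H] {f : H → ℝ} {A : ℝ → ℝ} {X Z : ℝ → H} {y : H}

noncomputable def lyapunovEnergy (f : H → ℝ) (A : ℝ → ℝ) (X Z : ℝ → H) (y : H) (t : ℝ) : ℝ :=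
  A t * (f (X t) - f y) + 1 / 2 * ‖Z t - y‖ ^ 2

theorem lyapunovEnergy_nonneg {t : ℝ} (hA : 0 ≤ A t) (hy : ∀ w, f y ≤ f w) :
    0 ≤ lyapunovEnergy f A X Z y t :=
  add_nonneg (mul_nonneg hA (sub_nonneg.2 (hy _))) (by positivity)

variable [InnerProductSpace ℝ H] [CompleteSpace H]

theorem hasDerivAt_lyapunovEnergy {g x' z' : H} {A' t : ℝ} (hA : HasDerivAt A A' t)
    (hf : HasGradientAt f g (X t)) (hX : HasDerivAt X x' t) (hZ : HasDerivAt Z z' t) :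
    HasDerivAt (lyapunovEnergy f A X Z y)
      (A' * (f (X t) - f y) + A t * ⟪g, x'⟫ + ⟪Z t - y, z'⟫) t := by
  have := (hA.mul ((hf.comp_hasDerivAt hX).sub_const (f y))).add
    (((hZ.sub_const y).norm_sq).const_mul (1 / 2))
  exact this.congr_deriv (by ring)

theorem lyapunovEnergy_deriv_le {g x x' : H} {α β γ A' : ℝ} (hf : ConvexOn ℝ univ f)
    (hg : HasGradientAt f g x) (hy : ∀ w, f y ≤ f w) (hα : 0 ≤ α) (hA' : A' ≤ α) :
    A' * (f x - f y) + α * β * ⟪g, x'⟫ + ⟪β • x' + γ • g + x - y, -α • g⟫ ≤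
      -(α * γ * ‖g‖ ^ 2) := by
  have hsupport : f x - f y ≤ ⟪g, x - y⟫ := by
    have := hf.inner_gradient_le_sub hg y
    rw [← neg_sub x y, inner_neg_right] at this
    linarith
  have hexpand : ⟪β • x' + γ • g + x - y, -α • g⟫ =
      -(α * β * ⟪g, x'⟫) - α * γ * ‖g‖ ^ 2 - α * ⟪g, x - y⟫ := by
    rw [add_sub_assoc, real_inner_comm]
    simp only [inner_add_right, real_inner_smul_left, real_inner_smul_right,
      real_inner_self_eq_norm_sq]
    ring
  have hgap : 0 ≤ f x - f y := sub_nonneg.2 (hy x)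
  rw [hexpand]
  nlinarith [mul_le_mul_of_nonneg_right hA' hgap, mul_le_mul_of_nonneg_left hsupport hα]

end Lyapunov

theorem sppa_stmt3_general
    {H : Type*} [NormedAddCommGroup H] [InnerProductSpace ℝ H] [CompleteSpace H]
    (f : H → ℝ) (g : H → H)
    (hconv : ConvexOn ℝ Set.univ f)
    (hgrad : ∀ x, HasGradientAt f (g x) x)
    (Ω : Set H) (hΩ : Ω = {y : H | ∀ w, f y ≤ f w})
    (xs : H) (hxs : xs ∈ Ω)
    (a b c : ℝ → ℝ)
    (hapos : ∀ t > (0:ℝ), 0 < a t) (hbpos : ∀ t > (0:ℝ), 0 < b t)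
    (ha0 : 0 ≤ a 0) (hb0 : 0 ≤ b 0)
    (x0 : H) (X Z X' : ℝ → H)
    (hX0 : X 0 = x0) (hZ0 : Z 0 = x0)
    (hX : ∀ t ∈ Set.Ici (0:ℝ), HasDerivAt X (X' t) t)
    (hZeq : ∀ t ∈ Set.Ici (0:ℝ), Z t = b t • X' t + c t • g (X t) + X t)
    (hZ' : ∀ t ∈ Set.Ici (0:ℝ), HasDerivAt Z (-(a t) • g (X t)) t)
    (A' : ℝ → ℝ)
    (hA : ∀ t ∈ Set.Ici (0:ℝ), HasDerivAt (fun s => a s * b s) (A' t) t)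
    (hA'le : ∀ t ∈ Set.Ici (0:ℝ), A' t ≤ a t) :
    ∫ t in Set.Ioi (0:ℝ), a t * c t * ‖g (X t)‖^2 ≤
      a 0 * b 0 * (f x0 - f xs) + (1/2) * (Metric.infDist x0 Ω)^2 := by
  subst hΩ
  have hinitial_gap : 0 ≤ f x0 - f xs := sub_nonneg.2 (hxs x0)
  -- Off integrability the Bochner integral is `0`, and the right-hand side is nonnegative.
  by_cases hint : IntegrableOn (fun t => a t * c t * ‖g (X t)‖ ^ 2) (Ioi 0)
  swap
  · rw [integral_undef hint]
    exact add_nonneg (mul_nonneg (mul_nonneg ha0 hb0) hinitial_gap) (by positivity)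
  set I := ∫ t in Ioi 0, a t * c t * ‖g (X t)‖ ^ 2
  suffices ∀ y ∈ {y : H | ∀ w, f y ≤ f w}, 2 * (I - a 0 * b 0 * (f x0 - f xs)) ≤ dist x0 y ^ 2 by
    linarith [Metric.le_infDist_sq ⟨xs, hxs⟩ this]
  intro y hy
  have hE := integral_Ioi_le_of_hasDerivAt_le_neg
    (E := lyapunovEnergy f (fun s => a s * b s) X Z y)
    (fun t ht => hasDerivAt_lyapunovEnergy (hA t ht) (hgrad _) (hX t ht) (hZ' t ht))
    (fun t ht => hZeq t ht ▸ lyapunovEnergy_deriv_le hconv (hgrad _) hy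
      (nonneg_of_nonneg_zero_of_pos ha0 hapos ht) (hA'le t ht))
    (fun t ht => lyapunovEnergy_nonneg (mul_nonneg (nonneg_of_nonneg_zero_of_pos ha0 hapos ht)
      (nonneg_of_nonneg_zero_of_pos hb0 hbpos ht)) hy) hint
  have hfy : f y = f xs := le_antisymm (hy xs) (hxs y)
  simp only [lyapunovEnergy, hX0, hZ0, hfy, ← dist_eq_norm] at hE
  linarith

/-- Integral bound
`∫₀^∞ a_t c_t ‖∇f(X t)‖² dt ≤ A₀ (f x₀ - f*) + (1/2) dist(x₀, Ω)²`,
where `Ω` is the set of minimizers of `f`. -/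
theorem sppa_stmt3
    {H : Type*} [NormedAddCommGroup H] [InnerProductSpace ℝ H] [CompleteSpace H]
    (f : H → ℝ) (g : H → H)
    (hconv : ConvexOn ℝ Set.univ f)
    (hgrad : ∀ x, HasGradientAt f (g x) x)
    (Ω : Set H) (hΩ : Ω = {y : H | ∀ w, f y ≤ f w}) (hΩne : Ω.Nonempty)
    (xs : H) (hxs : xs ∈ Ω)
    (a b c : ℝ → ℝ)
    (hapos : ∀ t > (0:ℝ), 0 < a t) (hbpos : ∀ t > (0:ℝ), 0 < b t)
    (hcpos : ∀ t > (0:ℝ), 0 < c t)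
    (ha0 : 0 ≤ a 0) (hb0 : 0 ≤ b 0) (hc0 : 0 ≤ c 0)
    (x0 : H) (X Z X' : ℝ → H)
    (hX0 : X 0 = x0) (hZ0 : Z 0 = x0)
    (hX : ∀ t ∈ Set.Ici (0:ℝ), HasDerivAt X (X' t) t)
    (hZeq : ∀ t ∈ Set.Ici (0:ℝ), Z t = b t • X' t + c t • g (X t) + X t)
    (hZ' : ∀ t ∈ Set.Ici (0:ℝ), HasDerivAt Z (-(a t) • g (X t)) t)
    (A' : ℝ → ℝ)
    (hA : ∀ t ∈ Set.Ici (0:ℝ), HasDerivAt (fun s => a s * b s) (A' t) t)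
    (hA'nonneg : ∀ t ∈ Set.Ici (0:ℝ), 0 ≤ A' t)
    (hA'le : ∀ t ∈ Set.Ici (0:ℝ), A' t ≤ a t) :
    ∫ t in Set.Ioi (0:ℝ), a t * c t * ‖g (X t)‖^2 ≤
      a 0 * b 0 * (f x0 - f xs) + (1/2) * (Metric.infDist x0 Ω)^2 :=
  sppa_stmt3_general f g hconv hgrad Ω hΩ xs hxs a b c hapos hbpos ha0 hb0 x0 X Z X' hX0 hZ0 hX hZeq
    hZ' A' hA hA'le
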